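/- arXiv:math/0507101 — 3 statements merged into one kernel-verified Lean document; each statement's English description precedes it below -/
import Mathlib

section
/- The diagonal inclusion of the positive integers ℕ_{>0} into Ẑ^♮ induces an isomorphism of multiplicative monoids from ℕ_{>0} onto the quotient monoid Ẑ^♮/Ẑ^×; that is, every x ∈ Ẑ^♮ can be written as x = n·u with n a positive integer and u ∈ Ẑ^×, and the positive integer n is uniquely determined by x. -/
/-!
A unit `x` of `A_f` has `v(x_v) = 1` for almost all `v`, and `x ∈ Ẑ^♮` says `v(x_v) ≤ 1` for
all `v`; in a principal ideal domain such a family of valuations is realised by a product of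
powers of prime generators, and a nonzero element is determined up to a unit by its valuations
since its ideal is the product of the primes to their multiplicities. Over `ℤ` this gives a unique
positive integer `n` with the valuations of `x`, and `x = n·u` with `u ∈ Ẑ^×` exactly when `n⁻¹x`
has all valuations `1`, that is when `n` and `x` have the same valuations.
-/

open IsDedekindDomain IsDedekindDomain.HeightOneSpectrum

noncomputable section

/-- The finite adele ring of ℚ. -/
abbrev Af : Type := FiniteAdeleRing ℤ ℚ

/-- A finite adele is integral if all its components are integral, i.e. it lies in Ẑ. -/
def IsIntegralAdele (x : Af) : Prop :=
  ∀ v : HeightOneSpectrum ℤ, x v ∈ v.adicCompletionIntegers ℚ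

/-- Ẑ^×, the subgroup of A_f^× of ideles that are integral with integral inverse. -/
def zhatUnits : Subgroup Afˣ where
  carrier := {u | IsIntegralAdele (u : Af) ∧ IsIntegralAdele ((u⁻¹ : Afˣ) : Af)}
  one_mem' := ⟨fun v => one_mem _, fun v => one_mem _⟩
  mul_mem' := by
    rintro a b ⟨ha, ha'⟩ ⟨hb, hb'⟩
    exact ⟨fun v => mul_mem (ha v) (hb v), by
      rw [mul_inv_rev]; exact fun v => mul_mem (hb' v) (ha' v)⟩
  inv_mem' := by
    rintro a ⟨ha, ha'⟩
    exact ⟨ha', by rw [inv_inv]; exact ha⟩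

/-- Ẑ^♮, the submonoid of A_f^× of integral ideles. -/
def zhatNat : Submonoid Afˣ where
  carrier := {u | IsIntegralAdele (u : Af)}
  one_mem' := fun v => one_mem _
  mul_mem' := fun ha hb v => mul_mem (ha v) (hb v)

/-- The diagonal embedding of ℚ^× into the finite ideles. -/
def diagQ : ℚˣ →* Afˣ := Units.map (algebraMap ℚ Af).toMonoidHom

/-- The positive integer `n`, viewed as a finite idele. -/
def diagNat (n : ℕ+) : Afˣ :=
  diagQ (Units.mk0 (n : ℚ) (by exact_mod_cast n.ne_zero))


open WithZero Submodule.IsPrincipal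

namespace IsDedekindDomain.HeightOneSpectrum

theorem associated_of_intValuation_eq {R : Type*} [CommRing R] [IsDedekindDomain R] {r s : R}
    (hr : r ≠ 0) (hs : s ≠ 0)
    (h : ∀ v : HeightOneSpectrum R, v.intValuation r = v.intValuation s) : Associated r s := by
  have hmult (v : HeightOneSpectrum R) :
      multiplicity v.asIdeal (Ideal.span {r}) = multiplicity v.asIdeal (Ideal.span {s}) := by
    simpa [intValuation_eq_exp_neg_multiplicity, hr, hs] using h v
  rw [← Ideal.span_singleton_eq_span_singleton]
  calc Ideal.span {r}
      = ∏ᶠ v : HeightOneSpectrum R, v.asIdeal ^ multiplicity v.asIdeal (Ideal.span {r}) :=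
        (Ideal.finprod_heightOneSpectrum_pow_multiplicity (by simpa using hr)).symm
    _ = Ideal.span {s} := by
        simp only [hmult]
        exact Ideal.finprod_heightOneSpectrum_pow_multiplicity (by simpa using hs)

section PrincipalIdealRing

variable {R : Type*} [CommRing R] [IsPrincipalIdealRing R]

theorem generator_ne_zero (v : HeightOneSpectrum R) : generator v.asIdeal ≠ 0 :=
  fun h => v.ne_bot ((eq_bot_iff_generator_eq_zero _).mpr h)

variable [IsDomain R]

open Classical in
theorem intValuation_generator (v w : HeightOneSpectrum R) :
    v.intValuation (generator w.asIdeal) = if w = v then exp (-1) else 1 := by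
  split_ifs with hwv
  · subst hwv
    exact intValuation_singleton _ (generator_ne_zero w) (Ideal.span_singleton_generator _).symm
  · rw [intValuation_eq_one_iff, ← Ideal.span_singleton_le_iff_mem, Ideal.span_singleton_generator]
    exact fun hle => hwv (HeightOneSpectrum.ext (w.isMaximal.eq_of_le v.isPrime.ne_top hle))

theorem exists_intValuation_eq {γ : HeightOneSpectrum R → ℤᵐ⁰} (hγ₀ : ∀ v, γ v ≠ 0)
    (hγ₁ : ∀ v, γ v ≤ 1) (hγ : ∀ᶠ v in Filter.cofinite, γ v = 1) :
    ∃ r : R, r ≠ 0 ∧ ∀ v, v.intValuation r = γ v := by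
  classical
  set T := (Filter.eventually_cofinite.mp hγ).toFinset
  set e : HeightOneSpectrum R → ℕ := fun w => (-log (γ w)).toNat
  refine ⟨∏ w ∈ T, generator w.asIdeal ^ e w,
    Finset.prod_ne_zero_iff.mpr fun w _ => pow_ne_zero _ (generator_ne_zero w), fun v => ?_⟩
  simp only [map_prod, map_pow, intValuation_generator, ite_pow, one_pow, Finset.prod_ite_eq']
  split_ifs with hv
  · have hlog : log (γ v) ≤ 0 := (log_le_iff_le_exp (hγ₀ v)).mpr (hγ₁ v)
    rw [← exp_nsmul, smul_neg, nsmul_one, Int.toNat_of_nonneg (neg_nonneg.mpr hlog), neg_neg,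
      exp_log (hγ₀ v)]
  · exact (by simpa [T] using hv : γ v = 1).symm

end PrincipalIdealRing

theorem existsUnique_pnat_intValuation_eq {γ : HeightOneSpectrum ℤ → ℤᵐ⁰} (hγ₀ : ∀ v, γ v ≠ 0)
    (hγ₁ : ∀ v, γ v ≤ 1) (hγ : ∀ᶠ v in Filter.cofinite, γ v = 1) :
    ∃! n : ℕ+, ∀ v : HeightOneSpectrum ℤ, v.intValuation ((n : ℕ) : ℤ) = γ v := by
  obtain ⟨r, hr, hrγ⟩ := exists_intValuation_eq hγ₀ hγ₁ hγ
  have hn (v : HeightOneSpectrum ℤ) : v.intValuation (r.natAbs : ℤ) = γ v := by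
    rcases Int.natAbs_eq r with h | h <;> rw [h] at hrγ <;> simpa using hrγ v
  refine ⟨⟨r.natAbs, Int.natAbs_pos.mpr hr⟩, hn, fun m hm => PNat.eq ?_⟩
  have hassoc := associated_of_intValuation_eq (by simp) (by simpa using hr)
    fun v => (hm v).trans (hn v).symm
  simpa only [Int.natAbs_natCast, PNat.mk_coe] using Int.associated_iff_natAbs.mp hassoc

end IsDedekindDomain.HeightOneSpectrum

namespace IsDedekindDomain.FiniteAdeleRing

variable {R K : Type*} [CommRing R] [IsDedekindDomain R] [Field K] [Algebra R K]
  [IsFractionRing R K]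

theorem mul_apply (a b : FiniteAdeleRing R K) (v : HeightOneSpectrum R) :
    (a * b) v = a v * b v :=
  rfl

theorem valued_units_apply_ne_zero (u : (FiniteAdeleRing R K)ˣ) (v : HeightOneSpectrum R) :
    Valued.v ((u : FiniteAdeleRing R K) v) ≠ 0 :=
  (Valuation.ne_zero_iff _).mpr ((isUnit_iff.mp u.isUnit).1 v)

theorem valued_units_inv_apply (u : (FiniteAdeleRing R K)ˣ) (v : HeightOneSpectrum R) :
    Valued.v ((↑u⁻¹ : FiniteAdeleRing R K) v) = (Valued.v ((u : FiniteAdeleRing R K) v))⁻¹ := by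
  refine eq_inv_of_mul_eq_one_left ?_
  rw [← map_mul, ← mul_apply, u.inv_mul]
  exact map_one _

theorem units_apply_mem_and_inv_apply_mem_iff (u : (FiniteAdeleRing R K)ˣ)
    (v : HeightOneSpectrum R) :
    ((u : FiniteAdeleRing R K) v ∈ v.adicCompletionIntegers K ∧
      (↑u⁻¹ : FiniteAdeleRing R K) v ∈ v.adicCompletionIntegers K) ↔
      Valued.v ((u : FiniteAdeleRing R K) v) = 1 := by
  rw [mem_adicCompletionIntegers, mem_adicCompletionIntegers, valued_units_inv_apply,
    inv_le_one₀ (zero_lt_iff.mpr (valued_units_apply_ne_zero u v)), le_antisymm_iff]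

end IsDedekindDomain.FiniteAdeleRing

open FiniteAdeleRing

theorem mem_zhatUnits_iff {u : Afˣ} : u ∈ zhatUnits ↔ ∀ v, Valued.v ((u : Af) v) = 1 := by
  rw [← forall_congr' (units_apply_mem_and_inv_apply_mem_iff u), forall_and]
  rfl

theorem valued_diagNat_apply (n : ℕ+) (v : HeightOneSpectrum ℤ) :
    Valued.v ((diagNat n : Af) v) = v.intValuation ((n : ℕ) : ℤ) := by
  change Valued.v ((algebraMap ℚ Af (n : ℚ)) v) = _
  rw [FiniteAdeleRing.algebraMap_apply, valuedAdicCompletion_eq_valuation',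
    ← valuation_of_algebraMap (K := ℚ)]
  simp

theorem exists_zhatUnits_eq_diagNat_mul_iff {x : Afˣ} {n : ℕ+} :
    (∃ u ∈ zhatUnits, x = diagNat n * u) ↔
      ∀ v, v.intValuation ((n : ℕ) : ℤ) = Valued.v ((x : Af) v) := by
  have hquot : (∃ u ∈ zhatUnits, x = diagNat n * u) ↔ (diagNat n)⁻¹ * x ∈ zhatUnits :=
    ⟨fun ⟨u, hu, hx⟩ => by rwa [hx, inv_mul_cancel_left],
      fun h => ⟨_, h, (mul_inv_cancel_left _ _).symm⟩⟩
  rw [hquot, mem_zhatUnits_iff]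
  refine forall_congr' fun v => ?_
  rw [Units.val_mul, mul_apply, map_mul, valued_units_inv_apply, valued_diagNat_apply,
    inv_mul_eq_one₀ (v.intValuation_ne_zero _ (by positivity))]

/-- ℕ_{>0} ≅ Ẑ^♮/Ẑ^×: every integral finite idele `x` is `n·u` for a unique positive
integer `n` and some `u ∈ Ẑ^×`. -/
theorem natPos_monoidIso_zhatNat_mod_zhatUnits (x : Afˣ) (hx : x ∈ zhatNat) :
    ∃! n : ℕ+, ∃ u ∈ zhatUnits, x = diagNat n * u := by
  simp only [exists_zhatUnits_eq_diagNat_mul_iff]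
  exact existsUnique_pnat_intValuation_eq (valued_units_apply_ne_zero x)
    (fun v => (mem_adicCompletionIntegers _ _ _).mp (hx v)) (isUnit_iff.mp x.isUnit).2
end
end

section
/- Let Sh denote the quotient of {±1} × A_f^× by the action of ℚ^× given by q·(ε, l) = (sign(q)·ε, q·l), with classes written [ε, l], and let Y := Ẑ × Sh. Define a partially defined action of A_f^× on Y by g·(ρ, [ε, l]) := (g·ρ, [ε, l·g⁻¹]) whenever g·ρ ∈ Ẑ, and let ∼ be the equivalence relation on Y (commensurability) generated by y ∼ g·y for all such g. Let W := {m ∈ A_f : m = l·ρ for some l ∈ A_f^× and ρ ∈ Ẑ}, and let ℚ^× act on {±1} × W by q·(ε, m) = (sign(q)·ε, q·m). Then the map π sending (ρ, [ε, l]) ∈ Y to the class of (ε, l·ρ) in the quotient ℚ^×\({±1} × W) is well defined and induces a bijection from the set of commensurability classes Y/∼ onto ℚ^×\({±1} × W). -/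
open IsDedekindDomain IsDedekindDomain.HeightOneSpectrum

noncomputable section

/-- The sign of a nonzero rational, as an element of {±1} = ℤˣ. -/
def signQ (q : ℚˣ) : ℤˣ := if 0 < (q : ℚ) then 1 else -1

/-- The action of ℚ^× on {±1} × A_f^×: q·(ε, l) = (sign(q)·ε, q·l). -/
def relSh : (ℤˣ × Afˣ) → (ℤˣ × Afˣ) → Prop := fun p p' =>
  ∃ q : ℚˣ, p'.1 = signQ q * p.1 ∧ p'.2 = diagQ q * p.2

/-- Sh(𝔾_m, {±1}) = ℚ^×\({±1} × A_f^×). -/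
def Sh : Type := Quot relSh

/-- Right multiplication by an idele on Sh(𝔾_m, {±1}). -/
def shMul (c : Afˣ) : Sh → Sh :=
  Quot.lift (fun p => Quot.mk relSh (p.1, p.2 * c))
    (by
      rintro ⟨ε, l⟩ ⟨ε', l'⟩ ⟨q, h1, h2⟩
      exact Quot.sound ⟨q, h1, by rw [h2, mul_assoc]⟩)

/-- Y = Ẑ × Sh(𝔾_m, {±1}). -/
def Y : Type := {p : Af × Sh // IsIntegralAdele p.1}

/-- The commensurability relation on Y, generated by the partially defined action of A_f^×:
g·(ρ, [ε, l]) = (g·ρ, [ε, l·g⁻¹]) whenever g·ρ ∈ Ẑ. -/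
def relY : Y → Y → Prop := fun p q => ∃ g : Afˣ,
  IsIntegralAdele ((g : Af) * p.1.1) ∧
  q.1.1 = (g : Af) * p.1.1 ∧ q.1.2 = shMul g⁻¹ p.1.2

/-- W = {m ∈ A_f : m = l·ρ with l ∈ A_f^× and ρ ∈ Ẑ}. -/
def W : Type := {m : Af // ∃ l : Afˣ, ∃ ρ : Af, IsIntegralAdele ρ ∧ m = (l : Af) * ρ}

/-- The action of ℚ^× on {±1} × W: q·(ε, m) = (sign(q)·ε, q·m). -/
def relW : (ℤˣ × W) → (ℤˣ × W) → Prop := fun p q =>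
  ∃ r : ℚˣ, q.1 = signQ r * p.1 ∧ q.2.1 = algebraMap ℚ Af (r : ℚ) * p.2.1

/-- The commensurability class map π : Y → ℚ^×\({±1} × W), (ρ, [ε, l]) ↦ [ε, l·ρ]. -/
def commClassMap (p : Y) : Quot relW :=
  Quot.lift
    (fun s : ℤˣ × Afˣ =>
      Quot.mk relW (s.1, ⟨(s.2 : Af) * p.1.1, s.2, p.1.1, p.2, rfl⟩))
    (by
      rintro ⟨ε, l⟩ ⟨ε', l'⟩ ⟨q, h1, h2⟩
      refine Quot.sound ⟨q, h1, ?_⟩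
      show (l' : Af) * p.1.1 = algebraMap ℚ Af (q : ℚ) * ((l : Af) * p.1.1)
      rw [show l' = diagQ q * l from h2, Units.val_mul, mul_assoc]
      rfl)
    p.1.2

/-! π is constant on commensurability classes because `g` acts on `ρ` and on `l` by inverse
factors, so `l * ρ` is unchanged. Conversely, if `π y = π y'` through some `r ∈ ℚ^×`, first
replace the representative `(ε, l)` of the `Sh`-component of `y` by `(sign r * ε, r * l)`; the two
points then carry the same sign and the same product `l * ρ = l' * ρ'`, and `g = l'⁻¹ * l` moves
one to the other. -/

lemma signQ_one : signQ 1 = 1 := by simp [signQ]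

lemma signQ_mul (a b : ℚˣ) : signQ (a * b) = signQ a * signQ b := by
  rcases a.ne_zero.lt_or_gt with ha | ha <;> rcases b.ne_zero.lt_or_gt with hb | hb <;>
    simp [signQ, ha, hb, ha.not_gt, hb.not_gt, mul_pos_iff]

lemma relW_equivalence : Equivalence relW where
  refl _ := ⟨1, by rw [signQ_one, one_mul], by rw [Units.val_one, map_one, one_mul]⟩
  symm := by
    rintro p q ⟨r, hε, hm⟩
    refine ⟨r⁻¹, ?_, ?_⟩
    · rw [hε, ← mul_assoc, ← signQ_mul, inv_mul_cancel, signQ_one, one_mul]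
    · rw [hm, ← mul_assoc, ← map_mul, Units.inv_mul, map_one, one_mul]
  trans := by
    rintro p q s ⟨r, hε, hm⟩ ⟨r', hε', hm'⟩
    exact ⟨r' * r, by rw [hε', hε, signQ_mul, mul_assoc],
      by rw [hm', hm, Units.val_mul, map_mul, mul_assoc]⟩

def mkY (ε : ℤˣ) (l : Afˣ) (ρ : Af) (hρ : IsIntegralAdele ρ) : Y :=
  ⟨(ρ, Quot.mk relSh (ε, l)), hρ⟩

lemma mkY_surjective (y : Y) : ∃ ε l ρ hρ, mkY ε l ρ hρ = y := by
  obtain ⟨⟨ρ, s⟩, hρ⟩ := y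
  obtain ⟨⟨ε, l⟩, rfl⟩ := Quot.exists_rep s
  exact ⟨ε, l, ρ, hρ, rfl⟩

lemma mkY_diagQ_mul (ε : ℤˣ) (l : Afˣ) (ρ : Af) (hρ : IsIntegralAdele ρ) (r : ℚˣ) :
    mkY (signQ r * ε) (diagQ r * l) ρ hρ = mkY ε l ρ hρ :=
  Subtype.ext <| Prod.ext rfl <| (Quot.sound ⟨r, rfl, rfl⟩).symm

lemma relY_mkY_of_mul_eq {ε : ℤˣ} {l l' : Afˣ} {ρ ρ' : Af} (hρ : IsIntegralAdele ρ)
    (hρ' : IsIntegralAdele ρ') (h : (l : Af) * ρ = l' * ρ') :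
    relY (mkY ε l ρ hρ) (mkY ε l' ρ' hρ') := by
  have hg : ((l'⁻¹ * l : Afˣ) : Af) * ρ = ρ' := by
    rw [Units.val_mul, mul_assoc, h, ← mul_assoc, Units.inv_mul, one_mul]
  refine ⟨l'⁻¹ * l, hg ▸ hρ', hg.symm, ?_⟩
  show Quot.mk relSh (ε, l') = Quot.mk relSh (ε, l * (l'⁻¹ * l)⁻¹)
  rw [mul_inv_rev, inv_inv, mul_inv_cancel_left]

lemma commClassMap_eq_of_relY {y y' : Y} (h : relY y y') : commClassMap y = commClassMap y' := by
  obtain ⟨ε, l, ρ, hρ, rfl⟩ := mkY_surjective y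
  obtain ⟨g, -, hρ', hs⟩ := h
  obtain ⟨⟨ρ', s'⟩, _⟩ := y'
  dsimp only at hρ' hs
  subst hρ' hs
  refine congrArg (Quot.mk relW) (Prod.ext rfl (Subtype.ext ?_))
  show (l : Af) * ρ = ((l * g⁻¹ : Afˣ) : Af) * (g * ρ)
  rw [Units.val_mul, mul_assoc, Units.inv_mul_cancel_left]

lemma mk_relY_eq_of_commClassMap_eq {y y' : Y} (h : commClassMap y = commClassMap y') :
    Quot.mk relY y = Quot.mk relY y' := by
  obtain ⟨ε, l, ρ, hρ, rfl⟩ := mkY_surjective y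
  obtain ⟨ε', l', ρ', hρ', rfl⟩ := mkY_surjective y'
  obtain ⟨r, hε, hm⟩ := relW_equivalence.eqvGen_iff.mp (Quot.eqvGen_exact h)
  change ε' = signQ r * ε at hε
  change (l' : Af) * ρ' = algebraMap ℚ Af r * (l * ρ) at hm
  subst hε
  rw [← mkY_diagQ_mul ε l ρ hρ r]
  exact Quot.sound <| relY_mkY_of_mul_eq hρ hρ' <| by
    rw [hm, Units.val_mul, mul_assoc]; rfl

/-- The commensurability class map π is well defined and induces a bijection from the set
of commensurability classes Y/∼ onto ℚ^×\({±1} × W). -/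
theorem commClassMap_bijective_on_classes :
    ∃ P : Quot relY → Quot relW,
      Function.Bijective P ∧ ∀ y : Y, P (Quot.mk relY y) = commClassMap y := by
  refine ⟨Quot.lift commClassMap fun _ _ ↦ commClassMap_eq_of_relY, ⟨?_, ?_⟩, fun _ ↦ rfl⟩
  · rintro ⟨y⟩ ⟨y'⟩ h
    exact mk_relY_eq_of_commClassMap_eq h
  · rintro ⟨⟨ε, m, l, ρ, hρ, rfl⟩⟩
    exact ⟨Quot.mk relY (mkY ε l ρ hρ), rfl⟩
end
end

section
/- Let Z_BC := {(g, ρ) ∈ ℚ_{>0} × Ẑ : g·ρ ∈ Ẑ}. For functions f₁, f₂ : Z_BC → ℂ define the convolution (f₁ * f₂)(g, ρ) = Σ_{h ∈ ℚ_{>0}, h·ρ ∈ Ẑ} f₁(g·h⁻¹, h·ρ)·f₂(h, ρ) (whenever only finitely many terms are nonzero) and the adjoint f*(g, ρ) = conj(f(g⁻¹, g·ρ)). For n ∈ ℕ_{>0} let μ_n : Z_BC → ℂ be μ_n(g, ρ) = 1 if g = 1/n and 0 otherwise. Then for every finitely supported f : Z_BC → ℂ and every (g, ρ) ∈ Z_BC,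 all convolutions below are given by finite sums, (g, n·ρ) ∈ Z_BC, and (μ_n * f * μ_n*)(g, ρ) = f(g, n·ρ). -/
open IsDedekindDomain IsDedekindDomain.HeightOneSpectrum

noncomputable section

/-- The Bost–Connes groupoid: pairs (g, ρ) ∈ ℚ_{>0} × Ẑ with g·ρ ∈ Ẑ. -/
def ZBC : Type :=
  {p : ℚ × Af // 0 < p.1 ∧ IsIntegralAdele p.2 ∧ IsIntegralAdele (algebraMap ℚ Af p.1 * p.2)}

/-- The index set of the Bost–Connes convolution at the point (g, ρ):
positive rationals h with h·ρ ∈ Ẑ. -/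
def Dom (p : ZBC) : Type :=
  {h : ℚ // 0 < h ∧ IsIntegralAdele (algebraMap ℚ Af h * p.1.2)}

/-- The point (g·h⁻¹, h·ρ) of the Bost–Connes groupoid. -/
def leftArg (p : ZBC) (h : Dom p) : ZBC :=
  ⟨(p.1.1 / h.1, algebraMap ℚ Af h.1 * p.1.2),
    div_pos p.2.1 h.2.1, h.2.2, by
      have key : algebraMap ℚ Af (p.1.1 / h.1) * (algebraMap ℚ Af h.1 * p.1.2) =
          algebraMap ℚ Af p.1.1 * p.1.2 := by
        rw [← mul_assoc, ← map_mul, div_mul_cancel₀ _ (ne_of_gt h.2.1)]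
      rw [key]; exact p.2.2.2⟩

/-- The point (h, ρ) of the Bost–Connes groupoid. -/
def rightArg (p : ZBC) (h : Dom p) : ZBC :=
  ⟨(h.1, p.1.2), h.2.1, p.2.2.1, h.2.2⟩

/-- The convolution product of the Bost–Connes Hecke algebra:
(f₁ * f₂)(g, ρ) = Σ_{h > 0, h·ρ ∈ Ẑ} f₁(g·h⁻¹, h·ρ)·f₂(h, ρ). -/
def conv (f₁ f₂ : ZBC → ℂ) (p : ZBC) : ℂ :=
  ∑' h : Dom p, f₁ (leftArg p h) * f₂ (rightArg p h)

/-- The adjoint of the Bost–Connes Hecke algebra: f*(g, ρ) = conj f(g⁻¹, g·ρ). -/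
def adjBC (f : ZBC → ℂ) (p : ZBC) : ℂ :=
  (starRingEnd ℂ) (f ⟨(p.1.1⁻¹, algebraMap ℚ Af p.1.1 * p.1.2),
    inv_pos.2 p.2.1, p.2.2.2, by
      have key : algebraMap ℚ Af p.1.1⁻¹ * (algebraMap ℚ Af p.1.1 * p.1.2) = p.1.2 := by
        rw [← mul_assoc, ← map_mul, inv_mul_cancel₀ (ne_of_gt p.2.1), map_one, one_mul]
      rw [key]; exact p.2.2.1⟩)

/-- μ_n(g, ρ) = 1 if g = 1/n and 0 otherwise. -/
def mu (n : ℕ+) : ZBC → ℂ := fun p => if p.1.1 = 1 / (n : ℚ) then 1 else 0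

/-! Since μ_n is supported on `g = 1/n`, the convolution sum defining `μ_n * F` at `(g, ρ)` has
at most one nonzero term, `h = n·g`, and the one defining `F * μ_n*` has at most one, `h = n`.
Hence `(μ_n * F)(g, ρ) = F(n·g, ρ)` and `(F * μ_n*)(g, ρ) = F(g/n, n·ρ)`, and composing the two
gives `f(g, n·ρ)`. -/

lemma IsIntegralAdele.mul {x y : Af} (hx : IsIntegralAdele x) (hy : IsIntegralAdele y) :
    IsIntegralAdele (x * y) := fun v => mul_mem (hx v) (hy v)

lemma isIntegralAdele_natCast (m : ℕ) : IsIntegralAdele (m : Af) := fun v =>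
  natCast_mem (v.adicCompletionIntegers ℚ) m

lemma IsIntegralAdele.natCast_mul (m : ℕ) {x : Af} (hx : IsIntegralAdele x) :
    IsIntegralAdele (algebraMap ℚ Af (m : ℚ) * x) := by
  rw [map_natCast]
  exact (isIntegralAdele_natCast m).mul hx

lemma Function.support_finite_of_eq_zero_of_ne {α M : Type*} [Zero M] {f : α → M} (a : α)
    (hf : ∀ b, b ≠ a → f b = 0) : (Function.support f).Finite :=
  (Set.finite_singleton a).subset (Function.support_subset_iff'.2 hf)

lemma ZBC.ext {p q : ZBC} (h₁ : p.1.1 = q.1.1) (h₂ : p.1.2 = q.1.2) : p = q :=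
  Subtype.ext (Prod.ext h₁ h₂)

namespace Dom

def natMul (n : ℕ+) (q : ZBC) : Dom q :=
  ⟨(n : ℚ) * q.1.1, mul_pos (Nat.cast_pos.2 n.pos) q.2.1, by
    rw [map_mul, mul_assoc]
    exact q.2.2.2.natCast_mul n⟩

def natCast (n : ℕ+) (p : ZBC) : Dom p :=
  ⟨(n : ℚ), Nat.cast_pos.2 n.pos, p.2.2.1.natCast_mul n⟩

end Dom

section

variable (n : ℕ+)

lemma mu_leftArg_eq_zero {q : ZBC} {h : Dom q} (hh : h ≠ Dom.natMul n q) :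
    mu n (leftArg q h) = 0 := by
  refine if_neg fun H => hh (Subtype.ext ?_)
  have hh₀ : h.1 ≠ 0 := h.2.1.ne'
  change q.1.1 / h.1 = 1 / n at H
  rw [div_eq_div_iff hh₀ (by positivity)] at H
  change h.1 = n * q.1.1
  linarith

lemma mu_leftArg_natMul (q : ZBC) : mu n (leftArg q (Dom.natMul n q)) = 1 := by
  refine if_pos ?_
  change q.1.1 / (n * q.1.1) = 1 / n
  field_simp [q.2.1.ne']

lemma adjBC_mu_rightArg_eq_zero {p : ZBC} {h : Dom p} (hh : h ≠ Dom.natCast n p) :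
    adjBC (mu n) (rightArg p h) = 0 := by
  refine (congrArg _ (if_neg fun H => hh (Subtype.ext ?_))).trans (map_zero _)
  change h.1⁻¹ = 1 / n at H
  rw [one_div, inv_inj] at H
  exact H

lemma adjBC_mu_rightArg_natCast (p : ZBC) : adjBC (mu n) (rightArg p (Dom.natCast n p)) = 1 :=
  (congrArg _ (if_pos (one_div _).symm)).trans (map_one _)

lemma support_mu_conv_finite (f : ZBC → ℂ) (q : ZBC) :
    (Function.support fun h : Dom q => mu n (leftArg q h) * f (rightArg q h)).Finite :=
  Function.support_finite_of_eq_zero_of_ne (Dom.natMul n q) fun _ hh => by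
    rw [mu_leftArg_eq_zero n hh, zero_mul]

lemma support_conv_adjBC_mu_finite (F : ZBC → ℂ) (p : ZBC) :
    (Function.support fun h : Dom p => F (leftArg p h) * adjBC (mu n) (rightArg p h)).Finite :=
  Function.support_finite_of_eq_zero_of_ne (Dom.natCast n p) fun _ hh => by
    rw [adjBC_mu_rightArg_eq_zero n hh, mul_zero]

lemma mu_conv_apply (f : ZBC → ℂ) (q : ZBC) :
    conv (mu n) f q = f (rightArg q (Dom.natMul n q)) := by
  rw [conv, tsum_eq_single (Dom.natMul n q) fun _ hh => by rw [mu_leftArg_eq_zero n hh, zero_mul],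
    mu_leftArg_natMul, one_mul]

lemma conv_adjBC_mu_apply (F : ZBC → ℂ) (p : ZBC) :
    conv F (adjBC (mu n)) p = F (leftArg p (Dom.natCast n p)) := by
  rw [conv, tsum_eq_single (Dom.natCast n p) fun _ hh => by
    rw [adjBC_mu_rightArg_eq_zero n hh, mul_zero], adjBC_mu_rightArg_natCast, mul_one]

end

theorem mu_conv_mu_star_general (n : ℕ+) (f : ZBC → ℂ)
    (p : ZBC) :
    ∃ hmem : IsIntegralAdele (algebraMap ℚ Af (n : ℚ) * p.1.2) ∧
        IsIntegralAdele (algebraMap ℚ Af p.1.1 * (algebraMap ℚ Af (n : ℚ) * p.1.2)),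
      (∀ q : ZBC,
        (Function.support fun h : Dom q => mu n (leftArg q h) * f (rightArg q h)).Finite) ∧
      (Function.support fun h : Dom p =>
        conv (mu n) f (leftArg p h) * adjBC (mu n) (rightArg p h)).Finite ∧
      conv (conv (mu n) f) (adjBC (mu n)) p =
        f ⟨(p.1.1, algebraMap ℚ Af (n : ℚ) * p.1.2), p.2.1, hmem.1, hmem.2⟩ := by
  have hmem₂ : IsIntegralAdele (algebraMap ℚ Af p.1.1 * (algebraMap ℚ Af (n : ℚ) * p.1.2)) := by
    rw [mul_left_comm]
    exact p.2.2.2.natCast_mul n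
  refine ⟨⟨p.2.2.1.natCast_mul n, hmem₂⟩, support_mu_conv_finite n f,
    support_conv_adjBC_mu_finite n _ p, ?_⟩
  rw [conv_adjBC_mu_apply, mu_conv_apply]
  congr 1
  refine ZBC.ext ?_ rfl
  change (n : ℚ) * (p.1.1 / n) = p.1.1
  field_simp

/-- The symmetry θ_n(f)(g, ρ) = f(g, n·ρ) of the Bost–Connes system is the inner
automorphism implemented by μ_n: for finitely supported f, all convolutions are given by
finite sums, (g, n·ρ) ∈ Z_BC, and (μ_n * f * μ_n*)(g, ρ) = f(g, n·ρ). -/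
theorem mu_conv_mu_star (n : ℕ+) (f : ZBC → ℂ) (hf : (Function.support f).Finite)
    (p : ZBC) :
    ∃ hmem : IsIntegralAdele (algebraMap ℚ Af (n : ℚ) * p.1.2) ∧
        IsIntegralAdele (algebraMap ℚ Af p.1.1 * (algebraMap ℚ Af (n : ℚ) * p.1.2)),
      (∀ q : ZBC,
        (Function.support fun h : Dom q => mu n (leftArg q h) * f (rightArg q h)).Finite) ∧
      (Function.support fun h : Dom p =>
        conv (mu n) f (leftArg p h) * adjBC (mu n) (rightArg p h)).Finite ∧
      conv (conv (mu n) f) (adjBC (mu n)) p =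
        f ⟨(p.1.1, algebraMap ℚ Af (n : ℚ) * p.1.2), p.2.1, hmem.1, hmem.2⟩ :=
  mu_conv_mu_star_general n f p
end
end
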